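/- arXiv:1910.07643 — 3 statements merged into one kernel-verified Lean document; each statement's English description precedes it below -/
import Mathlib

section
/- The M-product is associative: for tensors X ∈ ℝ^{I×J×T}, Y ∈ ℝ^{J×K×T}, Z ∈ ℝ^{K×L×T} and invertible M ∈ ℝ^{T×T}, (X ⋆ Y) ⋆ Z = X ⋆ (Y ⋆ Z). -/
open Finset

/-- The M-transform of an `I × J × T` tensor: `(X ×₃ M)_{ijt} = ∑ₖ M_{tk} X_{ijk}`. -/
def mtransform {I J T : ℕ} (M : Matrix (Fin T) (Fin T) ℝ)
    (X : Fin I → Fin J → Fin T → ℝ) : Fin I → Fin J → Fin T → ℝ :=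
  fun i j t => ∑ k, M t k * X i j k

/-- The facewise product: frontal-slice-wise matrix multiplication. -/
def facewise {I J K T : ℕ} (X : Fin I → Fin J → Fin T → ℝ)
    (Y : Fin J → Fin K → Fin T → ℝ) : Fin I → Fin K → Fin T → ℝ :=
  fun i k t => ∑ j, X i j t * Y j k t

/-- The M-product: `X ⋆ Y = ((X ×₃ M) △ (Y ×₃ M)) ×₃ M⁻¹`. -/
noncomputable def mprod {I J K T : ℕ} (M : Matrix (Fin T) (Fin T) ℝ)
    (X : Fin I → Fin J → Fin T → ℝ) (Y : Fin J → Fin K → Fin T → ℝ) :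
    Fin I → Fin K → Fin T → ℝ :=
  mtransform M⁻¹ (facewise (mtransform M X) (mtransform M Y))

/-- The identity tensor: `I = Î ×₃ M⁻¹` with each frontal slice of `Î` the identity matrix. -/
noncomputable def idTensor {N T : ℕ} (M : Matrix (Fin T) (Fin T) ℝ) : Fin N → Fin N → Fin T → ℝ :=
  mtransform M⁻¹ (fun i j _ => if i = j then (1 : ℝ) else 0)

/-- The tensor transpose: transpose each frontal slice in the transformed domain. -/
noncomputable def ttranspose {I J T : ℕ} (M : Matrix (Fin T) (Fin T) ℝ)
    (X : Fin I → Fin J → Fin T → ℝ) : Fin J → Fin I → Fin T → ℝ :=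
  mtransform M⁻¹ (fun j i t => mtransform M X i j t)


lemma mtransform_mtransform {I J T : ℕ} (M N : Matrix (Fin T) (Fin T) ℝ)
    (X : Fin I → Fin J → Fin T → ℝ) :
    mtransform M (mtransform N X) = mtransform (M * N) X := by
  funext i j t
  simp only [mtransform, Matrix.mul_apply, Finset.mul_sum, Finset.sum_mul]
  rw [Finset.sum_comm]
  congr 1; funext l; congr 1; funext k; ring

lemma mtransform_one {I J T : ℕ} (X : Fin I → Fin J → Fin T → ℝ) :
    mtransform (1 : Matrix (Fin T) (Fin T) ℝ) X = X := by
  funext i j t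
  simp [mtransform, Matrix.one_apply]

lemma mtransform_cancel {I J T : ℕ} (M : Matrix (Fin T) (Fin T) ℝ)
    (hM : IsUnit M.det) (X : Fin I → Fin J → Fin T → ℝ) :
    mtransform M (mtransform M⁻¹ X) = X := by
  rw [mtransform_mtransform, Matrix.mul_nonsing_inv M hM, mtransform_one]

lemma facewise_assoc {I J K L T : ℕ} (X : Fin I → Fin J → Fin T → ℝ)
    (Y : Fin J → Fin K → Fin T → ℝ) (Z : Fin K → Fin L → Fin T → ℝ) :
    facewise (facewise X Y) Z = facewise X (facewise Y Z) := by
  funext i l t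
  simp only [facewise, Finset.sum_mul, Finset.mul_sum]
  rw [Finset.sum_comm]
  congr 1; funext k; congr 1; funext j; ring

/-- The M-product is associative. -/
theorem mprod_assoc {I J K L T : ℕ} (M : Matrix (Fin T) (Fin T) ℝ)
    (hM : IsUnit M.det) (X : Fin I → Fin J → Fin T → ℝ)
    (Y : Fin J → Fin K → Fin T → ℝ) (Z : Fin K → Fin L → Fin T → ℝ) :
    mprod M (mprod M X Y) Z = mprod M X (mprod M Y Z) := by
  unfold mprod
  rw [mtransform_cancel M hM, mtransform_cancel M hM, facewise_assoc]
end

section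
/- Let Q ∈ ℝ^{N×N×T} be orthogonal with respect to the M-product (Q ⋆ Qᵀ = Qᵀ ⋆ Q = I). Then the lateral slices Q_{:n:} ∈ ℝ^{N×1×T}, n = 1,…,N, form a basis of the free module (ℝ^{N×1×T}, ⋆) over the ring (ℝ^{1×1×T}, ⋆): they generate the module, and if Σ_n Q_{:n:} ⋆ S_{n1:} = 0 for some S ∈ ℝ^{N×1×T}, then S = 0. -/
open Finset

/-- M-transform of a tube (a `1 × 1 × T` tensor, identified with a vector in `ℝ^T`). -/
def mtv {T : ℕ} (M : Matrix (Fin T) (Fin T) ℝ) (a : Fin T → ℝ) : Fin T → ℝ :=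
  fun t => ∑ k, M t k * a k

/-- M-product of two tubal scalars: `a ⋆ b = ((a ×₃ M) ⊙ (b ×₃ M)) ×₃ M⁻¹`. -/
noncomputable def tubeMul {T : ℕ} (M : Matrix (Fin T) (Fin T) ℝ) (a b : Fin T → ℝ) :
    Fin T → ℝ :=
  mtv M⁻¹ (fun t => mtv M a t * mtv M b t)

/-- The identity tubal scalar: `e ×₃ M⁻¹` with `e` the all-ones tube. -/
noncomputable def tubeOne {T : ℕ} (M : Matrix (Fin T) (Fin T) ℝ) : Fin T → ℝ :=
  mtv M⁻¹ (fun _ => 1)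

/-- Slice-wise action of a tubal scalar on an `N × 1 × T` tensor: `(X ⋆ θ)_{n1:} = X_{n1:} ⋆ θ`. -/
noncomputable def smulTube {N T : ℕ} (M : Matrix (Fin T) (Fin T) ℝ)
    (X : Fin N → Fin T → ℝ) (θ : Fin T → ℝ) : Fin N → Fin T → ℝ :=
  fun n => tubeMul M (X n) θ


lemma mtv_eq_mulVec {T : ℕ} (M : Matrix (Fin T) (Fin T) ℝ) (a : Fin T → ℝ) :
    mtv M a = M.mulVec a := rfl

lemma mtv_cancel {T : ℕ} {M : Matrix (Fin T) (Fin T) ℝ} (hM : IsUnit M.det)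
    (a : Fin T → ℝ) : mtv M (mtv M⁻¹ a) = a := by
  rw [mtv_eq_mulVec, mtv_eq_mulVec, Matrix.mulVec_mulVec,
    Matrix.mul_nonsing_inv _ hM, Matrix.one_mulVec]

lemma mtv_cancel' {T : ℕ} {M : Matrix (Fin T) (Fin T) ℝ} (hM : IsUnit M.det)
    (a : Fin T → ℝ) : mtv M⁻¹ (mtv M a) = a := by
  rw [mtv_eq_mulVec, mtv_eq_mulVec, Matrix.mulVec_mulVec,
    Matrix.nonsing_inv_mul _ hM, Matrix.one_mulVec]

/-- The lateral slices of an M-product orthogonal tensor `Q` form a basis of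
the free module `(ℝ^{N×1×T}, ⋆)`: they generate, and are linearly independent over the
tubal scalar ring. -/
theorem lateral_slices_basis {N T : ℕ} (M : Matrix (Fin T) (Fin T) ℝ)
    (hM : IsUnit M.det) (Q : Fin N → Fin N → Fin T → ℝ)
    (hQ1 : mprod M Q (ttranspose M Q) = idTensor M)
    (hQ2 : mprod M (ttranspose M Q) Q = idTensor M) :
    (∀ X : Fin N → Fin T → ℝ, ∃ S : Fin N → Fin T → ℝ,
      X = ∑ n, smulTube M (fun m => Q m n) (S n)) ∧
    (∀ S : Fin N → Fin T → ℝ,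
      (∑ n, smulTube M (fun m => Q m n) (S n)) = 0 → S = 0) := by
  -- Notation: Qh is the transformed tensor
  -- key orthogonality relations in the transformed domain
  have key : ∀ (h : mprod M Q (ttranspose M Q) = idTensor M) (i j : Fin N) (t : Fin T),
      (∑ n, mtransform M Q i n t * mtransform M Q j n t) = (if i = j then (1:ℝ) else 0) := by
    intro h i j t
    have h0 : mprod M Q (ttranspose M Q) i j = idTensor M i j := by rw [h]
    have h1 : mtv M (mprod M Q (ttranspose M Q) i j) = mtv M ((idTensor M : Fin N → Fin N → Fin T → ℝ) i j) := by rw [h0]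
    have h2 : mtv M (mprod M Q (ttranspose M Q) i j)
        = facewise (mtransform M Q) (mtransform M (ttranspose M Q)) i j := by
      exact mtv_cancel hM _
    have h3 : mtv M ((idTensor M : Fin N → Fin N → Fin T → ℝ) i j)
        = fun _ => (if i = j then (1:ℝ) else 0) := by
      exact mtv_cancel hM _
    have h4 : ∀ n, mtransform M (ttranspose M Q) n j t = mtransform M Q j n t := by
      intro n
      have : mtransform M (ttranspose M Q) n j = mtv M (mtv M⁻¹ (fun s => mtransform M Q j n s)) := rfl
      rw [this, mtv_cancel hM]
    have h5 := congrFun (h2.symm.trans (h1.trans h3)) t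
    simp only [facewise] at h5
    rw [← h5]
    exact Finset.sum_congr rfl (fun n _ => by rw [h4 n])
  have key1 := key hQ1
  -- second orthogonality: columns
  have key2 : ∀ (i j : Fin N) (t : Fin T),
      (∑ n, mtransform M Q n i t * mtransform M Q n j t) = (if i = j then (1:ℝ) else 0) := by
    intro i j t
    have h0 : mprod M (ttranspose M Q) Q i j = idTensor M i j := by rw [hQ2]
    have h1 : mtv M (mprod M (ttranspose M Q) Q i j) = mtv M ((idTensor M : Fin N → Fin N → Fin T → ℝ) i j) := by rw [h0]
    have h2 : mtv M (mprod M (ttranspose M Q) Q i j)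
        = facewise (mtransform M (ttranspose M Q)) (mtransform M Q) i j := by
      exact mtv_cancel hM _
    have h3 : mtv M ((idTensor M : Fin N → Fin N → Fin T → ℝ) i j)
        = fun _ => (if i = j then (1:ℝ) else 0) := by
      exact mtv_cancel hM _
    have h4 : ∀ n, mtransform M (ttranspose M Q) i n t = mtransform M Q n i t := by
      intro n
      have : mtransform M (ttranspose M Q) i n = mtv M (mtv M⁻¹ (fun s => mtransform M Q n i s)) := rfl
      rw [this, mtv_cancel hM]
    have h5 := congrFun (h2.symm.trans (h1.trans h3)) t
    simp only [facewise] at h5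
    rw [← h5]
    exact Finset.sum_congr rfl (fun n _ => by rw [h4 n])
  -- transform of the sum
  have hat_sum : ∀ (S : Fin N → Fin T → ℝ) (m : Fin N) (t : Fin T),
      mtv M ((∑ n, smulTube M (fun m => Q m n) (S n)) m) t
        = ∑ n, mtransform M Q m n t * mtv M (S n) t := by
    intro S m t
    have h1 : (∑ n, smulTube M (fun m => Q m n) (S n)) m
        = ∑ n, smulTube M (fun m => Q m n) (S n) m := by
      simp [Finset.sum_apply]
    have h2 : ∀ n, mtv M (smulTube M (fun m => Q m n) (S n) m)
        = fun t => mtransform M Q m n t * mtv M (S n) t := by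
      intro n
      have h : smulTube M (fun m => Q m n) (S n) m
          = mtv M⁻¹ (fun s => mtv M (Q m n) s * mtv M (S n) s) := rfl
      rw [h, mtv_cancel hM]
      rfl
    rw [h1]
    show (∑ k, M t k * (∑ n, smulTube M (fun m => Q m n) (S n) m) k)
        = ∑ n, mtransform M Q m n t * mtv M (S n) t
    simp only [Finset.sum_apply, Finset.mul_sum]
    rw [Finset.sum_comm]
    refine Finset.sum_congr rfl (fun n _ => ?_)
    have := congrFun (h2 n) t
    simpa [mtv] using this
  constructor
  · -- generation
    intro X
    refine ⟨fun n => mtv M⁻¹ (fun s => ∑ m', mtransform M Q m' n s * mtv M (X m') s), ?_⟩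
    set S : Fin N → Fin T → ℝ :=
      fun n => mtv M⁻¹ (fun s => ∑ m', mtransform M Q m' n s * mtv M (X m') s) with hSdef
    funext m
    have hc : ∀ n, mtv M (S n) = fun s => ∑ m', mtransform M Q m' n s * mtv M (X m') s :=
      fun n => mtv_cancel hM _
    have h : mtv M ((∑ n, smulTube M (fun m => Q m n) (S n)) m) = mtv M (X m) := by
      funext t
      rw [hat_sum]
      calc (∑ n, mtransform M Q m n t * mtv M (S n) t)
          = ∑ n, mtransform M Q m n t * ∑ m', mtransform M Q m' n t * mtv M (X m') t := by
            exact Finset.sum_congr rfl (fun n _ => by rw [hc n])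
        _ = ∑ m', (∑ n, mtransform M Q m n t * mtransform M Q m' n t) * mtv M (X m') t := by
            simp only [Finset.mul_sum, Finset.sum_mul]
            rw [Finset.sum_comm]
            exact Finset.sum_congr rfl (fun m' _ => Finset.sum_congr rfl (fun n _ => by ring))
        _ = ∑ m', (if m = m' then (1:ℝ) else 0) * mtv M (X m') t := by
            exact Finset.sum_congr rfl (fun m' _ => by rw [key1 m m' t])
        _ = mtv M (X m) t := by simp
    calc X m = mtv M⁻¹ (mtv M (X m)) := (mtv_cancel' hM _).symm
      _ = mtv M⁻¹ (mtv M ((∑ n, smulTube M (fun m => Q m n) (S n)) m)) := by rw [h]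
      _ = _ := mtv_cancel' hM _
  · -- independence
    intro S hS
    have hz : ∀ m t, (∑ n, mtransform M Q m n t * mtv M (S n) t) = 0 := by
      intro m t
      rw [← hat_sum S m t, hS]
      simp [mtv]
    have hSh : ∀ j t, mtv M (S j) t = 0 := by
      intro j t
      have h : (∑ m, mtransform M Q m j t * (∑ n, mtransform M Q m n t * mtv M (S n) t)) = 0 := by
        simp [hz]
      calc mtv M (S j) t
          = ∑ n, (if j = n then (1:ℝ) else 0) * mtv M (S n) t := by simp
        _ = ∑ n, (∑ m, mtransform M Q m j t * mtransform M Q m n t) * mtv M (S n) t := by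
            exact Finset.sum_congr rfl (fun n _ => by rw [key2 j n t])
        _ = ∑ m, mtransform M Q m j t * (∑ n, mtransform M Q m n t * mtv M (S n) t) := by
            simp only [Finset.mul_sum, Finset.sum_mul]
            rw [Finset.sum_comm]
            exact Finset.sum_congr rfl (fun m _ => Finset.sum_congr rfl (fun n _ => by ring))
        _ = 0 := h
    funext j
    have : S j = mtv M⁻¹ (mtv M (S j)) := (mtv_cancel' hM _).symm
    rw [this]
    have hz2 : mtv M (S j) = fun _ => (0:ℝ) := funext (fun t => hSh j t)
    rw [hz2]
    funext t
    simp [mtv]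
end

section
/- Let D ∈ ℝ^{N×N×T} be f-diagonal with all entries of D̂ = D ×₃ M in [0,2], and let g: ℝ^{1×1×T} → ℝ^{1×1×T} be defined by g(v) = f(v ×₃ M) ×₃ M⁻¹, where f acts in coordinate t by a continuous function f^{(t)}: ℝ → ℝ. Then for every ε > 0 there exist K ∈ ℕ and tubal scalars θ^{(0)}, …, θ^{(K)} ∈ ℝ^{1×1×T} such that ‖g(D) - Σ_{k=0}^K D^{⋆k} ⋆ θ^{(k)}‖ < ε in the tensor Frobenius norm, where D^{⋆k} is the k-fold M-product power of D and D^{⋆0} = I, and g(D) is the f-diagonal tensor with diagonal tubes g(D_{nn:}). -/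
open Finset

/-- Tube-wise action of a tubal scalar on an `N × N × T` tensor: `(X ⋆ θ)_{mn:} = X_{mn:} ⋆ θ`. -/
noncomputable def smulTT {N T : ℕ} (M : Matrix (Fin T) (Fin T) ℝ)
    (X : Fin N → Fin N → Fin T → ℝ) (θ : Fin T → ℝ) : Fin N → Fin N → Fin T → ℝ :=
  fun m n => tubeMul M (X m n) θ

/-- `k`-fold M-product power of a tensor, with `D^{⋆0} = I`. -/
noncomputable def mpow {N T : ℕ} (M : Matrix (Fin T) (Fin T) ℝ)
    (D : Fin N → Fin N → Fin T → ℝ) : ℕ → (Fin N → Fin N → Fin T → ℝ)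
  | 0 => idTensor M
  | k + 1 => mprod M (mpow M D k) D

/-- The `t`-th frontal slice of a tensor, as a matrix. -/
def frontal {N T : ℕ} (X : Fin N → Fin N → Fin T → ℝ) (t : Fin T) :
    Matrix (Fin N) (Fin N) ℝ :=
  Matrix.of fun i j => X i j t

/-- The spectral norm (ℓ² operator norm) of a real matrix. -/
noncomputable def specNorm {n : Type*} [Fintype n] [DecidableEq n]
    (A : Matrix n n ℝ) : ℝ :=
  ‖Matrix.toEuclideanCLM (𝕜 := ℝ) A‖

/-- The Frobenius norm of a tensor. -/
noncomputable def frob {I J T : ℕ} (X : Fin I → Fin J → Fin T → ℝ) : ℝ :=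
  Real.sqrt (∑ i, ∑ j, ∑ t, (X i j t) ^ 2)

/-- The f-diagonal tensor `g(D)` with diagonal tubes `g(D_{nn:})`, where
`g(v) = f(v ×₃ M) ×₃ M⁻¹` and `f` acts in coordinate `t` by `f t`. -/
noncomputable def gOfDiag {N T : ℕ} (M : Matrix (Fin T) (Fin T) ℝ)
    (f : Fin T → ℝ → ℝ) (D : Fin N → Fin N → Fin T → ℝ) :
    Fin N → Fin N → Fin T → ℝ :=
  fun m n => if m = n then mtv M⁻¹ (fun t => f t (mtv M (D n n) t)) else 0


section Aux

lemma mtv_mtv_inv {T : ℕ} {M : Matrix (Fin T) (Fin T) ℝ} (hM : IsUnit M.det)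
    (v : Fin T → ℝ) (t : Fin T) : mtv M (mtv M⁻¹ v) t = v t := by
  have h1 : M * M⁻¹ = 1 := Matrix.mul_nonsing_inv M hM
  simp only [mtv, Finset.mul_sum]
  rw [Finset.sum_comm]
  have : ∀ k : Fin T, (∑ s, M t s * (M⁻¹ s k * v k)) = (M * M⁻¹) t k * v k := by
    intro k
    simp [Matrix.mul_apply, Finset.sum_mul, mul_assoc]
  simp only [this, h1, Matrix.one_apply]
  simp

lemma mtransform_mtransform_inv {I J T : ℕ} {M : Matrix (Fin T) (Fin T) ℝ}
    (hM : IsUnit M.det) (Z : Fin I → Fin J → Fin T → ℝ) (i : Fin I) (j : Fin J) (t : Fin T) :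
    mtransform M (mtransform M⁻¹ Z) i j t = Z i j t :=
  mtv_mtv_inv hM (Z i j) t

lemma hat_pow {N T : ℕ} {M : Matrix (Fin T) (Fin T) ℝ} (hM : IsUnit M.det)
    {D : Fin N → Fin N → Fin T → ℝ}
    (hdiag : ∀ i j t, i ≠ j → mtransform M D i j t = 0) :
    ∀ (k : ℕ) (m n : Fin N) (t : Fin T),
      mtransform M (mpow M D k) m n t
        = if m = n then (mtransform M D n n t) ^ k else 0 := by
  intro k
  induction k with
  | zero =>
    intro m n t
    have : mtransform M (mpow M D 0) m n t = if m = n then (1 : ℝ) else 0 :=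
      mtransform_mtransform_inv hM _ m n t
    rw [this]
    by_cases h : m = n <;> simp [h]
  | succ k ih =>
    intro m n t
    have h1 : mtransform M (mpow M D (k+1)) m n t
        = facewise (mtransform M (mpow M D k)) (mtransform M D) m n t :=
      mtransform_mtransform_inv hM _ m n t
    rw [h1]
    have h2 : facewise (mtransform M (mpow M D k)) (mtransform M D) m n t
        = ∑ j, (if m = j then (mtransform M D j j t) ^ k else 0) * mtransform M D j n t := by
      unfold facewise
      congr 1
      ext j
      rw [ih m j t]
    rw [h2]
    rw [Finset.sum_eq_single m]
    · by_cases h : m = n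
      · subst h; simp [pow_succ]
      · simp [hdiag m n t h, h]
    · intro b _ hb
      simp [Ne.symm hb]
    · simp

lemma mtv_sum' {T : ℕ} (A : Matrix (Fin T) (Fin T) ℝ) {ι : Type*} (F : Finset ι)
    (G : ι → Fin T → ℝ) (t : Fin T) :
    ∑ k ∈ F, mtv A (G k) t = mtv A (fun s => ∑ k ∈ F, G k s) t := by
  simp only [mtv, Finset.mul_sum]
  rw [Finset.sum_comm]

lemma mtv_sub' {T : ℕ} (A : Matrix (Fin T) (Fin T) ℝ) (v w : Fin T → ℝ) (t : Fin T) :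
    mtv A (fun s => v s - w s) t = mtv A v t - mtv A w t := by
  simp [mtv, mul_sub, Finset.sum_sub_distrib]

end Aux

/-- Tensor polynomial approximation of a spectral filter. If `D` is f-diagonal
with all entries of `D ×₃ M` in `[0,2]`, and `g` is induced by coordinatewise continuous
functions `f t` in the transformed domain, then for every `ε > 0` there are `K` and tubal
scalars `θ^{(0)}, …, θ^{(K)}` with `‖g(D) - ∑ₖ D^{⋆k} ⋆ θ^{(k)}‖ < ε`. -/
theorem tensor_polynomial_approx {N T : ℕ} (M : Matrix (Fin T) (Fin T) ℝ)
    (hM : IsUnit M.det) (D : Fin N → Fin N → Fin T → ℝ)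
    (hdiag : ∀ i j t, i ≠ j → mtransform M D i j t = 0)
    (hbound : ∀ i j t, i = j → mtransform M D i j t ∈ Set.Icc (0 : ℝ) 2)
    (f : Fin T → ℝ → ℝ) (hf : ∀ t, Continuous (f t)) :
    ∀ ε > (0 : ℝ), ∃ (K : ℕ) (θ : ℕ → Fin T → ℝ),
      frob (gOfDiag M f D - ∑ k ∈ Finset.range (K + 1), smulTT M (mpow M D k) (θ k)) < ε := by
  intro ε hε
  set C : ℝ := ∑ t : Fin T, ∑ s : Fin T, |M⁻¹ t s| with hC
  have hC0 : 0 ≤ C := Finset.sum_nonneg fun _ _ => Finset.sum_nonneg fun _ _ => abs_nonneg _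
  set S : ℝ := Real.sqrt ((N : ℝ) * N * T) with hS
  have hS0 : 0 ≤ S := Real.sqrt_nonneg _
  set δ : ℝ := ε / ((C + 1) * (S + 1)) with hδ
  have hδ0 : 0 < δ := by apply div_pos hε; positivity
  have hpoly : ∀ t : Fin T, ∃ q : Polynomial ℝ,
      ∀ x ∈ Set.Icc (0:ℝ) 2, |Polynomial.eval x q - f t x| < δ := fun t =>
    exists_polynomial_near_of_continuousOn 0 2 (f t) ((hf t).continuousOn) δ hδ0
  choose p hp using hpoly
  set K : ℕ := Finset.univ.sup fun t : Fin T => (p t).natDegree with hKdef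
  set c : ℕ → Fin T → ℝ := fun k t => (p t).coeff k with hc
  refine ⟨K, fun k => mtv M⁻¹ (c k), ?_⟩
  set θ : ℕ → Fin T → ℝ := fun k => mtv M⁻¹ (c k) with hθ
  set E : Fin N → Fin N → Fin T → ℝ := fun m n s =>
    if m = n then f s (mtransform M D n n s)
      - Polynomial.eval (mtransform M D n n s) (p s) else 0 with hE
  have hEb : ∀ m n s, |E m n s| ≤ δ := by
    intro m n s
    by_cases h : m = n
    · simp only [hE, if_pos h]
      rw [abs_sub_comm]
      exact (hp s _ (hbound n n s rfl)).le
    · simp [hE, h, hδ0.le]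
  set Y := gOfDiag M f D - ∑ k ∈ Finset.range (K + 1), smulTT M (mpow M D k) (θ k) with hYdef
  have hY : ∀ m n t, Y m n t = mtv M⁻¹ (E m n) t := by
    intro m n t
    have hθc : ∀ k s, mtv M (θ k) s = c k s := fun k s => mtv_mtv_inv hM (c k) s
    have hsum : (∑ k ∈ Finset.range (K + 1), smulTT M (mpow M D k) (θ k)) m n t
        = ∑ k ∈ Finset.range (K + 1),
            mtv M⁻¹ (fun s => (if m = n then (mtransform M D n n s)^k else 0) * c k s) t := by
      simp only [Finset.sum_apply]
      refine Finset.sum_congr rfl fun k _ => ?_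
      have hfun : (fun s => mtv M (mpow M D k m n) s * mtv M (θ k) s)
          = fun s => (if m = n then (mtransform M D n n s)^k else 0) * c k s := by
        funext s
        rw [hθc k s]
        exact congrArg (· * c k s) (hat_pow hM hdiag k m n s)
      show mtv M⁻¹ (fun s => mtv M (mpow M D k m n) s * mtv M (θ k) s) t = _
      rw [hfun]
    rw [hYdef]
    simp only [Pi.sub_apply]
    rw [hsum]
    by_cases h : m = n
    · have hg : gOfDiag M f D m n t
          = mtv M⁻¹ (fun s => f s (mtransform M D n n s)) t := by
        simp only [gOfDiag, if_pos h]
        rfl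
      rw [hg, mtv_sum', ← mtv_sub']
      congr 1
      funext s
      simp only [hE, if_pos h]
      congr 1
      rw [Polynomial.eval_eq_sum_range'
        (Nat.lt_succ_of_le (Finset.le_sup (f := fun t : Fin T => (p t).natDegree)
          (Finset.mem_univ s)))]
      exact Finset.sum_congr rfl fun k _ => (mul_comm _ _)
    · simp [gOfDiag, h, hE, mtv]
  have hYb : ∀ m n t, |Y m n t| ≤ C * δ := by
    intro m n t
    rw [hY]
    calc |mtv M⁻¹ (E m n) t| ≤ ∑ s, |M⁻¹ t s * E m n s| := Finset.abs_sum_le_sum_abs _ _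
      _ ≤ ∑ s, |M⁻¹ t s| * δ := Finset.sum_le_sum fun s _ => by
            rw [abs_mul]
            exact mul_le_mul_of_nonneg_left (hEb m n s) (abs_nonneg _)
      _ = (∑ s, |M⁻¹ t s|) * δ := (Finset.sum_mul _ _ _).symm
      _ ≤ C * δ := by
            refine mul_le_mul_of_nonneg_right ?_ hδ0.le
            exact Finset.single_le_sum (f := fun t' => ∑ s, |M⁻¹ t' s|)
              (fun _ _ => Finset.sum_nonneg fun _ _ => abs_nonneg _) (Finset.mem_univ t)
  have hsq : ∑ m, ∑ n, ∑ t, (Y m n t)^2 ≤ (N : ℝ) * N * T * (C * δ)^2 := by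
    calc ∑ m, ∑ n, ∑ t, (Y m n t)^2
        ≤ ∑ _m : Fin N, ∑ _n : Fin N, ∑ _t : Fin T, (C * δ)^2 := by
          refine Finset.sum_le_sum fun m _ => Finset.sum_le_sum fun n _ =>
            Finset.sum_le_sum fun t _ => ?_
          rw [← sq_abs]
          exact pow_le_pow_left₀ (abs_nonneg _) (hYb m n t) 2
      _ = (N : ℝ) * N * T * (C * δ)^2 := by
          simp [Finset.sum_const, Finset.card_univ]
          ring
  have hfrob : frob Y ≤ S * (C * δ) := by
    have h1 : frob Y ≤ Real.sqrt ((N : ℝ) * N * T * (C * δ)^2) := Real.sqrt_le_sqrt hsq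
    have h2 : Real.sqrt ((N : ℝ) * N * T * (C * δ)^2) = S * (C * δ) := by
      rw [Real.sqrt_mul (by positivity), Real.sqrt_sq (by positivity)]
    rw [h2] at h1
    exact h1
  have hfin : S * (C * δ) < ε := by
    have hne : ((C + 1) * (S + 1)) ≠ 0 := by positivity
    have heq : (C + 1) * (S + 1) * δ = ε := by
      rw [hδ]
      field_simp
    nlinarith [hδ0, hC0, hS0]
  exact lt_of_le_of_lt hfrob hfin
end
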